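/- Let Ω ⊂ ℝⁿ be a bounded open convex set and let g : O → ℝ (with O ⊂ ℝ^{n−1} open containing y′) be such that the graph of g near y := (y′, g(y′)) lies in ∂Ω, g is differentiable at y′, and Ω lies above the graph. Let ã ∈ Ω and let ũ := u_{Ω,ã} be the cone function with vertex ã. If the affine function ℓ(x) := [(∇g(y′), −1)·(x − y)] / [1 + y′·∇g(y′) − g(y′) ] satisfies ℓ(ã) = −1 (which holds when ã = e_n lies above the graph appropriately), then ∇ℓ ∈ ∂ũ(ã); consequently the segment {s(∇g(y′), −1)/(1 + y′·∇g(y′) − g(y′)) : 0 ≤ s ≤ 1} is contained in ∂ũ(ã). -/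

import Mathlib

open scoped RealInnerProductSpace

/-- Append a last coordinate to a point of `ℝ^m`, giving a point of `ℝ^{m+1}`. -/
def snocE {m : ℕ} (x : EuclideanSpace ℝ (Fin m)) (c : ℝ) :
    EuclideanSpace ℝ (Fin (m + 1)) :=
  WithLp.toLp 2 (Fin.snoc (α := fun _ => ℝ) x.ofLp c)

/-- The first `m` coordinates of a point of `ℝ^{m+1}`. -/
def initE {m : ℕ} (x : EuclideanSpace ℝ (Fin (m + 1))) :
    EuclideanSpace ℝ (Fin m) :=
  WithLp.toLp 2 (fun i : Fin m => x.ofLp i.castSucc)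

/-- The subgradient of `u : Ω → ℝ` at `x`. -/
def subgrad {n : ℕ} (Ω : Set (EuclideanSpace ℝ (Fin n)))
    (u : EuclideanSpace ℝ (Fin n) → ℝ) (x : EuclideanSpace ℝ (Fin n)) :
    Set (EuclideanSpace ℝ (Fin n)) :=
  {p | ∀ z ∈ Ω, u x + ⟪p, z - x⟫ ≤ u z}

/-!
Since `Ω` is convex and lies above the graph of `g`, the tangent hyperplane of the graph at `y`
supports `Ω`: this is Fermat's rule for `x ↦ g(x') - xₙ`, which is maximal at `y` relative to `Ω`.
Hence `ℓ ≤ 0` on `∂Ω`, i.e. `⟪∇ℓ, b - ã⟫ ≤ 1` there, once normalised by `ℓ(ã) = -1`. The cone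
function `ũ` and `ℓ` are both affine on each segment from `∂Ω` to `ã` and agree at `ã`, so `ℓ ≤ ũ`,
which is `∇ℓ ∈ ∂ũ(ã)`. The segment follows because `∂ũ(ã)` is convex and contains `0`.
-/

open Filter Topology

section Calculus

variable {E : Type*} [NormedAddCommGroup E] [NormedSpace ℝ E]

/-- Fermat's rule on the segment from `y` to `x`, which lies in `Ω` except possibly at `y`. -/
theorem HasFDerivAt.apply_sub_nonpos_of_eventually_le {Ω : Set E} (hΩo : IsOpen Ω)
    (hΩc : Convex ℝ Ω) {F : E → ℝ} {F' : E →L[ℝ] ℝ} {y : E} (hF : HasFDerivAt F F' y)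
    (hy : y ∈ closure Ω) (hle : ∀ᶠ x in 𝓝[Ω] y, F x ≤ F y) {x : E} (hx : x ∈ closure Ω) :
    F' (x - y) ≤ 0 := by
  suffices h : ∀ x ∈ Ω, F' (x - y) ≤ 0 from
    closure_minimal h
      (isClosed_le (F'.continuous.comp (continuous_sub_right y)) continuous_const) hx
  intro x hx
  have hseg : segment ℝ y x ⊆ insert y Ω := by
    rw [← insert_endpoints_openSegment]
    refine Set.insert_subset_insert (Set.insert_subset hx ?_)
    simpa [hΩo.interior_eq] using
      hΩc.openSegment_closure_interior_subset_interior hy (hΩo.interior_eq.symm ▸ hx)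
  have hmax : IsLocalMaxOn F (segment ℝ y x) y := by
    refine nhdsWithin_mono _ hseg ?_
    rw [nhdsWithin_insert]
    exact eventually_sup.2 ⟨eventually_pure.2 le_rfl, hle⟩
  exact hmax.hasFDerivWithinAt_nonpos hF.hasFDerivWithinAt
    (sub_mem_posTangentConeAt_of_segment_subset le_rfl)

end Calculus

section Graph

variable {m : ℕ}

@[simp]
theorem initE_snocE (x : EuclideanSpace ℝ (Fin m)) (c : ℝ) : initE (snocE x c) = x := by
  ext i
  simp [initE, snocE]

@[simp]
theorem snocE_last (x : EuclideanSpace ℝ (Fin m)) (c : ℝ) : snocE x c (Fin.last m) = c := by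
  simp [snocE]

theorem inner_snocE_left (a : EuclideanSpace ℝ (Fin m)) (c : ℝ)
    (x : EuclideanSpace ℝ (Fin (m + 1))) :
    ⟪snocE a c, x⟫ = ⟪a, initE x⟫ + c * x (Fin.last m) := by
  simp [snocE, initE, PiLp.inner_apply, Fin.sum_univ_castSucc, mul_comm]

variable (m) in
noncomputable def initCLM : EuclideanSpace ℝ (Fin (m + 1)) →L[ℝ] EuclideanSpace ℝ (Fin m) :=
  LinearMap.toContinuousLinearMap
    { toFun := initE, map_add' := fun _ _ => rfl, map_smul' := fun _ _ => rfl }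

@[simp]
theorem initCLM_apply (x : EuclideanSpace ℝ (Fin (m + 1))) : initCLM m x = initE x := rfl

theorem hasFDerivAt_sub_graph {g : EuclideanSpace ℝ (Fin m) → ℝ}
    {y : EuclideanSpace ℝ (Fin (m + 1))} (hg : DifferentiableAt ℝ g (initE y)) :
    HasFDerivAt (fun x => g (initE x) - x (Fin.last m))
      (innerSL ℝ (snocE (gradient g (initE y)) (-1))) y := by
  have h := (hg.hasFDerivAt.comp y (initCLM m).hasFDerivAt).sub
    (EuclideanSpace.proj (Fin.last m) : _ →L[ℝ] ℝ).hasFDerivAt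
  refine h.congr_fderiv ?_
  ext v
  simp only [innerSL_apply_apply, inner_snocE_left, gradient, InnerProductSpace.toDual_symm_apply]
  simp [sub_eq_add_neg]

theorem inner_graphNormal_sub_nonpos {Ω : Set (EuclideanSpace ℝ (Fin (m + 1)))}
    (hΩo : IsOpen Ω) (hΩc : Convex ℝ Ω) {O : Set (EuclideanSpace ℝ (Fin m))} (hO : IsOpen O)
    {g : EuclideanSpace ℝ (Fin m) → ℝ} {y' : EuclideanSpace ℝ (Fin m)} (hy' : y' ∈ O)
    (hycl : snocE y' (g y') ∈ closure Ω) (hdiff : DifferentiableAt ℝ g y')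
    (habove : ∀ x ∈ Ω, initE x ∈ O → g (initE x) < x (Fin.last m))
    {x : EuclideanSpace ℝ (Fin (m + 1))} (hx : x ∈ closure Ω) :
    ⟪snocE (gradient g y') (-1), x - snocE y' (g y')⟫ ≤ 0 := by
  have hF := hasFDerivAt_sub_graph (y := snocE y' (g y')) (by simpa using hdiff)
  simp only [initE_snocE] at hF
  refine hF.apply_sub_nonpos_of_eventually_le hΩo hΩc hycl ?_ hx
  have hO' : ∀ᶠ x in 𝓝 (snocE y' (g y')), initE x ∈ O :=
    (initCLM m).continuous.continuousAt.preimage_mem_nhds (by simpa using hO.mem_nhds hy')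
  filter_upwards [self_mem_nhdsWithin, nhdsWithin_le_nhds hO'] with x hxΩ hxO
  simpa using (habove x hxΩ hxO).le

end Graph

/-- The ray from `a` through `z` must leave the bounded set `Ω`, and does so through `∂Ω`. -/
theorem exists_mem_frontier_mem_segment {E : Type*} [NormedAddCommGroup E] [NormedSpace ℝ E]
    {Ω : Set E} (hΩo : IsOpen Ω) (hΩb : Bornology.IsBounded Ω) (hfr : (frontier Ω).Nonempty)
    (a : E) {z : E} (hz : z ∈ Ω) : ∃ b ∈ frontier Ω, z ∈ segment ℝ b a := by
  obtain rfl | hza := eq_or_ne z a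
  · obtain ⟨b, hb⟩ := hfr
    exact ⟨b, hb, right_mem_segment ℝ b z⟩
  set v := z - a
  have hv : 0 < ‖v‖ := norm_pos_iff.2 (sub_ne_zero.2 hza)
  set ray := (fun t : ℝ => a + t • v) '' Set.Ici 1
  have hray : ¬ ray ⊆ Ω := by
    obtain ⟨R, hR⟩ := hΩb.subset_closedBall a
    intro hsub
    set t := max 1 ((|R| + 1) / ‖v‖)
    have hfar := hR (hsub ⟨t, Set.mem_Ici.2 (le_max_left _ _), rfl⟩)
    rw [Metric.mem_closedBall, dist_eq_norm, add_sub_cancel_left, norm_smul,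
      Real.norm_of_nonneg (by positivity)] at hfar
    have : (|R| + 1) / ‖v‖ * ‖v‖ ≤ t * ‖v‖ := by gcongr; exact le_max_right _ _
    rw [div_mul_cancel₀ _ hv.ne'] at this
    linarith [le_abs_self R]
  obtain ⟨b, ⟨hbcl, hbray⟩, hbΩ⟩ : ∃ b, (b ∈ closure Ω ∧ b ∈ ray) ∧ b ∉ Ω := by
    by_contra! h
    exact hray ((isPreconnected_Ici.image _ (by fun_prop)).subset_of_closure_inter_subset hΩo
      ⟨z, ⟨1, Set.self_mem_Ici, by simp [v]⟩, hz⟩ h)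
  obtain ⟨T, hT1 : 1 ≤ T, rfl⟩ := hbray
  have hT : 0 < T := lt_of_lt_of_le one_pos hT1
  refine ⟨a + T • v, hΩo.frontier_eq ▸ ⟨hbcl, hbΩ⟩, ?_⟩
  rw [segment_eq_image]
  refine ⟨1 - T⁻¹, ⟨by simp [inv_le_one_of_one_le₀ hT1], by simp [hT.le]⟩, ?_⟩
  simp only [sub_sub_cancel, smul_add, smul_smul, inv_mul_cancel₀ hT.ne', one_smul, v]
  module

section Cone

variable {n : ℕ} {Ω : Set (EuclideanSpace ℝ (Fin n))} {u : EuclideanSpace ℝ (Fin n) → ℝ}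
  {a : EuclideanSpace ℝ (Fin n)}

theorem convex_subgrad (x : EuclideanSpace ℝ (Fin n)) : Convex ℝ (subgrad Ω u x) := by
  intro p hp q hq s t hs ht hst z hz
  have := add_le_add (mul_le_mul_of_nonneg_left (hp z hz) hs)
    (mul_le_mul_of_nonneg_left (hq z hz) ht)
  rw [inner_add_left, real_inner_smul_left, real_inner_smul_left]
  linear_combination this + (u z - u x) * hst

/-- `u` and `-1 + ⟪p, · - a⟫` are both affine on each segment from `∂Ω` to `a` and agree at `a`,
so comparing them on `∂Ω` suffices. -/
theorem mem_subgrad_cone (hΩo : IsOpen Ω) (hΩb : Bornology.IsBounded Ω)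
    (hfr : (frontier Ω).Nonempty)
    (hcone : ∀ z ∈ frontier Ω, ∀ θ ∈ Set.Icc (0:ℝ) 1, u ((1 - θ) • z + θ • a) = -θ)
    {p : EuclideanSpace ℝ (Fin n)} (hp : ∀ b ∈ frontier Ω, ⟪p, b - a⟫ ≤ 1) :
    p ∈ subgrad Ω u a := by
  obtain ⟨b₀, hb₀⟩ := hfr
  have hua : u a = -1 := by simpa using hcone b₀ hb₀ 1 ⟨zero_le_one, le_rfl⟩
  intro z hz
  obtain ⟨b, hb, hzb⟩ := exists_mem_frontier_mem_segment hΩo hΩb ⟨b₀, hb₀⟩ a hz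
  rw [segment_eq_image] at hzb
  obtain ⟨θ, ⟨hθ0, hθ1⟩, rfl⟩ := hzb
  have hsub : (1 - θ) • b + θ • a - a = (1 - θ) • (b - a) := by module
  rw [hcone b hb θ ⟨hθ0, hθ1⟩, hua, hsub, real_inner_smul_right]
  nlinarith [hp b hb]

end Cone

theorem stmt19_general {m : ℕ} (Ω : Set (EuclideanSpace ℝ (Fin (m + 1))))
    (hΩo : IsOpen Ω) (hΩc : Convex ℝ Ω) (hΩb : Bornology.IsBounded Ω)
    (O : Set (EuclideanSpace ℝ (Fin m))) (hO : IsOpen O)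
    (g : EuclideanSpace ℝ (Fin m) → ℝ)
    (y' : EuclideanSpace ℝ (Fin m)) (hy' : y' ∈ O)
    (hgraph : ∀ x' ∈ O, snocE x' (g x') ∈ frontier Ω)
    (hdiff : DifferentiableAt ℝ g y')
    (habove : ∀ x ∈ Ω, initE x ∈ O → g (initE x) < x (Fin.last m))
    (atil : EuclideanSpace ℝ (Fin (m + 1))) (hatil : atil ∈ Ω)
    (u : EuclideanSpace ℝ (Fin (m + 1)) → ℝ)
    (hcone : ∀ z ∈ frontier Ω, ∀ θ ∈ Set.Icc (0:ℝ) 1,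
      u ((1 - θ) • z + θ • atil) = -θ)
    (w : EuclideanSpace ℝ (Fin (m + 1)))
    (hw : w = snocE (gradient g y') (-1))
    (denom : ℝ)
    (hl : ⟪w, atil - snocE y' (g y')⟫ / denom = -1) :
    denom⁻¹ • w ∈ subgrad Ω u atil ∧
      ∀ s : ℝ, 0 ≤ s → s ≤ 1 → s • (denom⁻¹ • w) ∈ subgrad Ω u atil := by
  have hyfr : snocE y' (g y') ∈ frontier Ω := hgraph y' hy'
  have hsupp : ∀ x ∈ closure Ω, ⟪w, x - snocE y' (g y')⟫ ≤ 0 := fun x hx =>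
    hw ▸ inner_graphNormal_sub_nonpos hΩo hΩc hO hy' hyfr.1 hdiff habove hx
  have hdenom0 : denom ≠ 0 := by
    rintro rfl
    norm_num at hl
  have hwa : ⟪w, atil - snocE y' (g y')⟫ = -denom := by
    rwa [div_eq_iff hdenom0, neg_one_mul] at hl
  have hdenom_pos : 0 < denom :=
    lt_of_le_of_ne (by linarith [hsupp atil (subset_closure hatil)]) hdenom0.symm
  have hp : ∀ b ∈ frontier Ω, ⟪denom⁻¹ • w, b - atil⟫ ≤ 1 := by
    intro b hb
    have hsplit : b - atil = (b - snocE y' (g y')) - (atil - snocE y' (g y')) := by abel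
    rw [real_inner_smul_left, inv_mul_le_iff₀ hdenom_pos, mul_one, hsplit, inner_sub_right, hwa]
    linarith [hsupp b hb.1]
  have hmem := mem_subgrad_cone hΩo hΩb ⟨_, hyfr⟩ hcone hp
  have hzero := mem_subgrad_cone (p := 0) hΩo hΩb ⟨_, hyfr⟩ hcone fun b _ => by simp
  exact ⟨hmem, fun s hs0 hs1 => (convex_subgrad atil).smul_mem_of_zero_mem hzero hmem ⟨hs0, hs1⟩⟩

/-- Let `Ω ⊆ ℝⁿ` (`n = m+1`) be bounded open and convex,
`g : O → ℝ` with `O ⊆ ℝ^{n-1}` open, the graph of `g` over `O` contained in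
`∂Ω`, `g` differentiable at `y' ∈ O`, and `Ω` above the graph.  Let `ã ∈ Ω` and
let `ũ` be the cone function with vertex `ã`.  If the affine function
`ℓ(x) = (∇g(y'),-1)·(x - (y', g y')) / (1 + y'·∇g(y') - g y')` satisfies
`ℓ(ã) = -1`, then `∇ℓ ∈ ∂ũ(ã)`, and consequently the segment
`{s(∇g(y'),-1)/(1 + y'·∇g(y') - g y') : 0 ≤ s ≤ 1}` is contained in `∂ũ(ã)`. -/
theorem stmt19 {m : ℕ} (Ω : Set (EuclideanSpace ℝ (Fin (m + 1))))
    (hΩo : IsOpen Ω) (hΩc : Convex ℝ Ω) (hΩb : Bornology.IsBounded Ω)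
    (O : Set (EuclideanSpace ℝ (Fin m))) (hO : IsOpen O)
    (g : EuclideanSpace ℝ (Fin m) → ℝ)
    (y' : EuclideanSpace ℝ (Fin m)) (hy' : y' ∈ O)
    (hgraph : ∀ x' ∈ O, snocE x' (g x') ∈ frontier Ω)
    (hdiff : DifferentiableAt ℝ g y')
    (habove : ∀ x ∈ Ω, initE x ∈ O → g (initE x) < x (Fin.last m))
    (atil : EuclideanSpace ℝ (Fin (m + 1))) (hatil : atil ∈ Ω)
    (u : EuclideanSpace ℝ (Fin (m + 1)) → ℝ)
    (hcone : ∀ z ∈ frontier Ω, ∀ θ ∈ Set.Icc (0:ℝ) 1,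
      u ((1 - θ) • z + θ • atil) = -θ)
    (w : EuclideanSpace ℝ (Fin (m + 1)))
    (hw : w = snocE (gradient g y') (-1))
    (denom : ℝ) (hdenom : denom = 1 + ⟪y', gradient g y'⟫ - g y')
    (hl : ⟪w, atil - snocE y' (g y')⟫ / denom = -1) :
    denom⁻¹ • w ∈ subgrad Ω u atil ∧
      ∀ s : ℝ, 0 ≤ s → s ≤ 1 → s • (denom⁻¹ • w) ∈ subgrad Ω u atil :=
  stmt19_general Ω hΩo hΩc hΩb O hO g y' hy' hgraph hdiff habove atil hatil u hcone w hw denom hl
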